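/- Let f be strictly increasing and continuous with multiplicative inverse f^{-1}, and let C be a channel with all entries positive. For any prior π with full support, gain function g (with f∘g nonnegative and V_{f,g}(π) > 0), the max-case multiplicative leakage satisfies max_{y} V_{f,g}(δ^y) / V_{f,g}(π) ≤ max_y f^{-1}((max_x C_{x,y}) / (min_x C_{x,y})); i.e., the max-case leakage is bounded by log f^{-1}(exp(L^LDP(C))), where L^LDP(C) = log max_y (max_x C_{x,y}/min_x C_{x,y}) is the local-differential-privacy leakage. -/

import Mathlib

/-!
For every output `y`, the posterior `δ^y` is dominated pointwise by the prior:
`π x C x y / ∑ π x' C x' y ≤ (max_x C x y / min_x C x y) π x`, since the normalising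
constant is an average of the column and hence at least its minimum. Because `f ∘ g ≥ 0`, this
domination passes through the expected gain, and multiplicativity of `f⁻¹` pulls the factor out:
`V(δ^y) ≤ f⁻¹(max/min) V(π)`.
-/

open Finset

noncomputable section

/-- The vulnerability `V_{f,g}`, with `f ∘ g` passed as the single function `F`. -/
def gVulnerability {X W : Type*} [Fintype X] (finv : ℝ → ℝ) (F : W → X → ℝ) (μ : X → ℝ) : ℝ :=
  ⨆ w, finv (∑ x, μ x * F w x)

def posterior {X Y : Type*} [Fintype X] (π : X → ℝ) (C : X → Y → ℝ) (y : Y) (x : X) : ℝ :=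
  π x * C x y / ∑ x', π x' * C x' y

end

lemma nonneg_apply_of_map_mul {φ : ℝ → ℝ}
    (hφ : ∀ a b : ℝ, 0 ≤ a → 0 ≤ b → φ (a * b) = φ a * φ b) {a : ℝ} (ha : 0 ≤ a) :
    0 ≤ φ a := by
  rw [← Real.mul_self_sqrt ha, hφ _ _ (Real.sqrt_nonneg a) (Real.sqrt_nonneg a)]
  exact mul_self_nonneg _

lemma posterior_le_ratio_mul_prior {X Y : Type*} [Fintype X] [Nonempty X]
    {π : X → ℝ} (hπ0 : ∀ x, 0 ≤ π x) (hπ1 : ∑ x, π x = 1)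
    {C : X → Y → ℝ} {y : Y} (hC : ∀ x, 0 < C x y) (x : X) :
    posterior π C y x ≤ (⨆ x, C x y) / (⨅ x, C x y) * π x := by
  obtain ⟨x₀, hx₀⟩ := exists_eq_ciInf_of_finite (f := fun x => C x y)
  have hmin_pos : 0 < ⨅ x, C x y := hx₀ ▸ hC x₀
  have hmin_le : (⨅ x, C x y) ≤ ∑ x', π x' * C x' y :=
    calc (⨅ x, C x y) = ∑ x', π x' * ⨅ x, C x y := by rw [← sum_mul, hπ1, one_mul]
      _ ≤ ∑ x', π x' * C x' y := sum_le_sum fun x' _ =>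
          mul_le_mul_of_nonneg_left (ciInf_le (Set.finite_range _).bddBelow x') (hπ0 x')
  have hle_max : C x y ≤ ⨆ x, C x y :=
    le_ciSup (f := fun x => C x y) (Set.finite_range _).bddAbove x
  rw [posterior, div_le_iff₀ (hmin_pos.trans_le hmin_le), div_mul_eq_mul_div,
    div_mul_eq_mul_div, le_div_iff₀ hmin_pos, mul_assoc]
  exact (mul_le_mul_of_nonneg_left
    (mul_le_mul hle_max hmin_le hmin_pos.le ((hC x).le.trans hle_max)) (hπ0 x)).trans_eq (by ring)

lemma gVulnerability_le_of_le_mul {X W : Type*} [Fintype X] [Nonempty W]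
    {finv : ℝ → ℝ} (hmono : Monotone finv)
    (hmul : ∀ a b : ℝ, 0 ≤ a → 0 ≤ b → finv (a * b) = finv a * finv b)
    {F : W → X → ℝ} (hF : ∀ w x, 0 ≤ F w x) {π μ : X → ℝ} (hπ : ∀ x, 0 ≤ π x)
    (hbdd : BddAbove (Set.range fun w => ∑ x, π x * F w x))
    {k : ℝ} (hk : 0 ≤ k) (hμ : ∀ x, μ x ≤ k * π x) :
    gVulnerability finv F μ ≤ finv k * gVulnerability finv F π := by
  have hbdd' : BddAbove (Set.range fun w => finv (∑ x, π x * F w x)) := by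
    rw [← Function.comp_def, Set.range_comp]
    exact hmono.map_bddAbove hbdd
  refine ciSup_le fun w => ?_
  have hgain : ∑ x, μ x * F w x ≤ k * ∑ x, π x * F w x := by
    rw [mul_sum]
    exact sum_le_sum fun x _ => by
      rw [← mul_assoc]; exact mul_le_mul_of_nonneg_right (hμ x) (hF w x)
  calc finv (∑ x, μ x * F w x)
      ≤ finv (k * ∑ x, π x * F w x) := hmono hgain
    _ = finv k * finv (∑ x, π x * F w x) :=
        hmul _ _ hk (sum_nonneg fun x _ => mul_nonneg (hπ x) (hF w x))
    _ ≤ finv k * gVulnerability finv F π :=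
        mul_le_mul_of_nonneg_left (le_ciSup hbdd' w) (nonneg_apply_of_map_mul hmul hk)

theorem stmt_12_general {X Y W : Type*} [Fintype X] [Fintype Y] [Nonempty X] [Nonempty Y] [Nonempty W]
    (π : X → ℝ) (hπ0 : ∀ x, 0 < π x) (hπ1 : ∑ x, π x = 1)
    (C : X → Y → ℝ) (hC0 : ∀ x y, 0 < C x y)
    (f finv : ℝ → ℝ) (g : W → X → ℝ)
    (hfinvm : Monotone finv)
    (hmul : ∀ a b : ℝ, 0 ≤ a → 0 ≤ b → finv (a * b) = finv a * finv b)
    (hg0 : ∀ w x, 0 ≤ f (g w x))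
    (hbdd : ∀ μ : X → ℝ, BddAbove (Set.range fun w : W => ∑ x, μ x * f (g w x)))
    (hVpos : 0 < ⨆ w : W, finv (∑ x, π x * f (g w x))) :
    (⨆ y, ⨆ w : W, finv (∑ x,
        (π x * C x y / ∑ x', π x' * C x' y) * f (g w x))) /
        (⨆ w : W, finv (∑ x, π x * f (g w x))) ≤
      ⨆ y, finv ((⨆ x, C x y) / (⨅ x, C x y)) := by
  rw [div_le_iff₀ hVpos]
  set F : W → X → ℝ := fun w x => f (g w x)
  change (⨆ y, gVulnerability finv F (posterior π C y)) ≤ _ * gVulnerability finv F π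
  refine ciSup_le fun y => ?_
  have hratio : 0 ≤ (⨆ x, C x y) / (⨅ x, C x y) :=
    div_nonneg (Real.iSup_nonneg fun x => (hC0 x y).le) (Real.iInf_nonneg fun x => (hC0 x y).le)
  calc gVulnerability finv F (posterior π C y)
      ≤ finv ((⨆ x, C x y) / (⨅ x, C x y)) * gVulnerability finv F π :=
        gVulnerability_le_of_le_mul hfinvm hmul hg0 (fun x => (hπ0 x).le) (hbdd π) hratio
          (posterior_le_ratio_mul_prior (fun x => (hπ0 x).le) hπ1 fun x => hC0 x y)
    _ ≤ (⨆ y, finv ((⨆ x, C x y) / (⨅ x, C x y))) * gVulnerability finv F π :=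
        mul_le_mul_of_nonneg_right (le_ciSup (f := fun y => finv ((⨆ x, C x y) / (⨅ x, C x y)))
          (Set.finite_range _).bddAbove y) hVpos.le

/-- For strictly increasing continuous `f` with multiplicative inverse `finv`,
a strictly positive channel `C`, full-support prior `π`, and a gain `g` with `f ∘ g ≥ 0`
and `V_{f,g}(π) > 0`, the max-case multiplicative leakage satisfies
`(max_y V_{f,g}(δ^y)) / V_{f,g}(π) ≤ max_y finv ((max_x C x y) / (min_x C x y))`. -/
theorem stmt_12 {X Y W : Type*} [Fintype X] [Fintype Y] [Nonempty X] [Nonempty Y] [Nonempty W]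
    (π : X → ℝ) (hπ0 : ∀ x, 0 < π x) (hπ1 : ∑ x, π x = 1)
    (C : X → Y → ℝ) (hC0 : ∀ x y, 0 < C x y) (hC1 : ∀ x, ∑ y, C x y = 1)
    (f finv : ℝ → ℝ) (g : W → X → ℝ)
    (hf : StrictMono f) (hfc : Continuous f) (hli : Function.LeftInverse finv f)
    (hfinvm : Monotone finv) (hfinvc : Continuous finv)
    (hmul : ∀ a b : ℝ, 0 ≤ a → 0 ≤ b → finv (a * b) = finv a * finv b)
    (hg0 : ∀ w x, 0 ≤ f (g w x))
    (hbdd : ∀ μ : X → ℝ, BddAbove (Set.range fun w : W => ∑ x, μ x * f (g w x)))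
    (hVpos : 0 < ⨆ w : W, finv (∑ x, π x * f (g w x))) :
    (⨆ y, ⨆ w : W, finv (∑ x,
        (π x * C x y / ∑ x', π x' * C x' y) * f (g w x))) /
        (⨆ w : W, finv (∑ x, π x * f (g w x))) ≤
      ⨆ y, finv ((⨆ x, C x y) / (⨅ x, C x y)) :=
  stmt_12_general π hπ0 hπ1 C hC0 f finv g hfinvm hmul hg0 hbdd hVpos
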